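/- Let χ₃ be the non-principal Dirichlet character mod 3 and let f be the completely multiplicative function with f(3) = ε ∈ {+1, -1} and f(p) = χ₃(p) for all primes p ≠ 3. Then ∑_{n ≤ x} f(n) = O(log x). -/

import Mathlib

/-!
Off the multiples of 3, `f` agrees with `χ₃`, whose partial sums are `0` or `1`; on them,
`f (3 m) = ε f m`. Hence `S(N) = ∑_{n ≤ N} f n` satisfies `‖S(N)‖ ≤ 1 + ‖S(N / 3)‖`, and iterating
this `log₃ N` times gives `‖S(N)‖ ≤ log₃ N + 1`.
-/

open Filter Asymptotics Finset

noncomputable def chi3 (n : ℕ) : ℂ := if n % 3 = 1 then 1 else if n % 3 = 2 then -1 else 0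

lemma chi3_mul (m n : ℕ) : chi3 (m * n) = chi3 m * chi3 n := by
  have hm : m % 3 < 3 := Nat.mod_lt _ (by norm_num)
  have hn : n % 3 < 3 := Nat.mod_lt _ (by norm_num)
  unfold chi3
  rw [Nat.mul_mod]
  interval_cases m % 3 <;> interval_cases n % 3 <;> norm_num

lemma chi3_eq_zero_of_dvd {n : ℕ} (h : 3 ∣ n) : chi3 n = 0 := by
  simp [chi3, Nat.mod_eq_zero_of_dvd h]

lemma sum_chi3_Icc (N : ℕ) : ∑ n ∈ Icc 1 N, chi3 n = if N % 3 = 1 then 1 else 0 := by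
  induction N with
  | zero => simp
  | succ N ih =>
    rw [sum_Icc_succ_top (by omega), ih]
    have : N % 3 < 3 := Nat.mod_lt _ (by norm_num)
    simp only [chi3, Nat.add_mod N 1 3]
    interval_cases N % 3 <;> norm_num

lemma norm_sum_chi3_Icc_le_one (N : ℕ) : ‖∑ n ∈ Icc 1 N, chi3 n‖ ≤ 1 := by
  rw [sum_chi3_Icc]; split <;> simp

lemma eq_chi3_of_not_dvd {f : ℕ → ℂ} (hf1 : f 1 = 1) (hmul : ∀ m n, f (m * n) = f m * f n)
    (hf : ∀ p : ℕ, p.Prime → p ≠ 3 → f p = chi3 p) {n : ℕ} (hn : ¬ 3 ∣ n) : f n = chi3 n := by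
  induction n using Nat.recOnMul with
  | zero => exact absurd (dvd_zero 3) hn
  | one => simp [hf1, chi3]
  | prime p hp => exact hf p hp (by rintro rfl; exact hn dvd_rfl)
  | mul a b iha ihb =>
    rw [hmul, chi3_mul, iha (fun h => hn (h.mul_right b)), ihb (fun h => hn (h.mul_left a))]

lemma sum_Icc_eq_sum_filter_not_dvd_add {M : Type*} [AddCommMonoid M] (f : ℕ → M) {d : ℕ}
    (hd : 0 < d) (N : ℕ) :
    ∑ n ∈ Icc 1 N, f n = ∑ n ∈ Icc 1 N with ¬ d ∣ n, f n + ∑ m ∈ Icc 1 (N / d), f (d * m) := by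
  rw [← sum_filter_not_add_sum_filter (Icc 1 N) (d ∣ ·)]
  congr 1
  symm
  refine sum_nbij' (d * ·) (· / d) ?_ ?_ ?_ ?_ (fun _ _ => rfl)
  · intro m hm
    simp only [mem_filter, mem_Icc] at hm ⊢
    refine ⟨⟨by nlinarith, ?_⟩, dvd_mul_right d m⟩
    exact (Nat.le_div_iff_mul_le hd).1 hm.2 |>.trans_eq' (mul_comm _ _)
  · intro n hn
    simp only [mem_filter, mem_Icc] at hn ⊢
    obtain ⟨⟨h1, h2⟩, k, rfl⟩ := hn
    rw [Nat.mul_div_cancel_left _ hd]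
    exact ⟨Nat.pos_of_mul_pos_left h1, (Nat.le_div_iff_mul_le hd).2 (by linarith [mul_comm k d])⟩
  · intro m _; exact Nat.mul_div_cancel_left _ hd
  · intro n hn
    simp only [mem_filter] at hn
    exact Nat.mul_div_cancel' hn.2

lemma le_mul_natLog_add_one {u : ℕ → ℝ} {b : ℕ} {C : ℝ} (hb : 1 < b) (h0 : u 0 ≤ 0)
    (hu : ∀ N, u N ≤ C + u (N / b)) (N : ℕ) : u N ≤ C * (Nat.log b N + 1) := by
  induction N using Nat.strong_induction_on with
  | _ N ih =>
    rcases lt_or_ge N b with hN | hN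
    · have hstep := hu N
      rw [Nat.div_eq_of_lt hN] at hstep
      rw [Nat.log_of_lt hN]
      push_cast; linarith
    · have hlog : Nat.log b N = Nat.log b (N / b) + 1 := by
        have := Nat.log_pos hb hN
        rw [Nat.log_div_base]; omega
      have hdiv := ih (N / b) (Nat.div_lt_self (by omega) hb)
      rw [hlog]; push_cast
      linarith [hu N]

lemma isBigO_log_of_norm_le_natLog {E : Type*} [SeminormedAddCommGroup E] {g : ℕ → E} {b : ℕ}
    {C : ℝ} (hb : 1 < b) (hg : ∀ N, ‖g N‖ ≤ C * (Nat.log b N + 1)) :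
    (fun x : ℝ => g ⌊x⌋₊) =O[atTop] Real.log := by
  have hlogb : (fun x : ℝ => C * (Real.logb b x + 1)) =O[atTop] Real.log :=
    ((Real.isBigO_logb_log.mono le_top).add Real.isLittleO_const_log_atTop.isBigO).const_mul_left C
  refine IsBigO.trans (IsBigO.of_bound 1 ?_) hlogb
  have hC : 0 ≤ C := by simpa using (norm_nonneg _).trans (hg 0)
  filter_upwards [eventually_ge_atTop 1] with x hx
  have hfloor : Real.logb b ⌊x⌋₊ ≤ Real.logb b x :=
    Real.logb_le_logb_of_le (by exact_mod_cast hb) (by simpa [Nat.floor_pos] using hx)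
      (Nat.floor_le (by linarith))
  calc ‖g ⌊x⌋₊‖ ≤ C * (Nat.log b ⌊x⌋₊ + 1) := hg _
    _ ≤ C * (Real.logb b x + 1) := by gcongr; exact (Real.natLog_le_logb _ _).trans hfloor
    _ ≤ 1 * ‖C * (Real.logb b x + 1)‖ := by rw [one_mul]; exact Real.le_norm_self _

lemma norm_sum_Icc_le_one_add_norm_sum_Icc_div_three {f : ℕ → ℂ} {ε : ℂ} (hε : ‖ε‖ ≤ 1)
    (hf3 : ∀ m, f (3 * m) = ε * f m) (hfχ : ∀ n, ¬ 3 ∣ n → f n = chi3 n) (N : ℕ) :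
    ‖∑ n ∈ Icc 1 N, f n‖ ≤ 1 + ‖∑ m ∈ Icc 1 (N / 3), f m‖ := by
  have hcoprime : ∑ n ∈ Icc 1 N with ¬ 3 ∣ n, f n = ∑ n ∈ Icc 1 N, chi3 n := by
    rw [sum_congr rfl fun n hn => hfχ n (mem_filter.1 hn).2]
    exact sum_filter_of_ne fun n _ h => mt chi3_eq_zero_of_dvd h
  rw [sum_Icc_eq_sum_filter_not_dvd_add f three_pos, hcoprime]
  simp_rw [hf3, ← mul_sum]
  calc _ ≤ ‖∑ n ∈ Icc 1 N, chi3 n‖ + ‖ε‖ * ‖∑ m ∈ Icc 1 (N / 3), f m‖ :=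
        (norm_add_le _ _).trans_eq (by rw [norm_mul])
    _ ≤ 1 + 1 * ‖∑ m ∈ Icc 1 (N / 3), f m‖ := by
        gcongr
        exact norm_sum_chi3_Icc_le_one N
    _ = _ := by rw [one_mul]

theorem stmt16 (f : ℕ → ℂ) (hf1 : f 1 = 1)
    (hmul : ∀ m n : ℕ, f (m * n) = f m * f n)
    (ε : ℂ) (hε : ε = 1 ∨ ε = -1) (hf3 : f 3 = ε)
    (hf : ∀ p : ℕ, p.Prime → p ≠ 3 →
      f p = if p % 3 = 1 then 1 else if p % 3 = 2 then -1 else 0) :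
    (fun x : ℝ => ∑ n ∈ Finset.Icc 1 ⌊x⌋₊, f n) =O[atTop]
      fun x : ℝ => Real.log x := by
  have hε1 : ‖ε‖ ≤ 1 := by rcases hε with rfl | rfl <;> simp
  have hrec := norm_sum_Icc_le_one_add_norm_sum_Icc_div_three hε1
    (fun m => by rw [hmul, hf3]) (fun n => eq_chi3_of_not_dvd hf1 hmul hf)
  exact isBigO_log_of_norm_le_natLog (g := fun N => ∑ n ∈ Icc 1 N, f n) (by norm_num : 1 < 3)
    (le_mul_natLog_add_one (u := fun N => ‖∑ n ∈ Icc 1 N, f n‖) (by norm_num) (by simp) hrec)
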